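/- arXiv:1903.07248 — 3 statements merged into one kernel-verified Lean document; each statement's English description precedes it below -/
import Mathlib

section
/- Let k be an algebraically closed field and let C be a connected scheme of finite type over k of pure dimension one, with irreducible decomposition C = C₁ ∪ ⋯ ∪ C_ℓ. If C does not form a tree, then there exists a non-trivial cycle sequence (a₁, …, aₙ) whose entries a₁, …, aₙ are pairwise distinct. -/
/-!
The irreducible components of a connected space are *linked*: whenever they are split into
two nonempty groups, the two unions are closed, cover the space, and hence meet. In a linked
finite family without cycles, the last member of a longest path is a leaf: any point it shares
with another member is the last point of the path (otherwise the path closes up to a cycle or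
can be prolonged), and removing it leaves a linked acyclic family. By induction such a family
forms a tree. So if `C` does not form a tree, its components contain a cycle
`Z₀, p₀, Z₁, …, Z_{m-1}, p_{m-1}`, and this list is the required cycle sequence: its entries are
distinct and it has length at least four, so neither operation (a) nor (b) applies to it.
The points `pᵢ` are closed because a non-closed point `p` on two components `Z ≠ Z'` would
give a chain `closure {q} ⊊ closure {p} ⊊ Z` of length two in a one-dimensional component.
-/

open AlgebraicGeometry

universe u

/-- One application of operation (a) to a cyclically-read finite sequence: if two
cyclically consecutive entries are equal, remove one of them.  By the convention
`a_{n+1} := a₁`, a sequence of length one always reduces to the empty sequence. -/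
def StepA {α : Type*} (l l' : List α) : Prop :=
  (∃ x, l = [x] ∧ l' = []) ∨
    ∃ (n : ℕ) (x : α) (rest : List α), l.rotate n = x :: x :: rest ∧ l' = x :: rest

/-- One application of operation (b): if `a_i = a_{i+2}` cyclically, remove `a_i` and
`a_{i+1}` (for a sequence of length two the conventions `a₃ := a₁`, `a₄ := a₂` make the
operation always applicable, yielding the empty sequence). -/
def StepB {α : Type*} (l l' : List α) : Prop :=
  (∃ (n : ℕ) (x y : α), l.rotate n = [x, y] ∧ l' = []) ∨
    ∃ (n : ℕ) (x y : α) (rest : List α), l.rotate n = x :: y :: x :: rest ∧ l' = x :: rest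

/-- One application of operation (a) or of operation (b). -/
def StepAB {α : Type*} (l l' : List α) : Prop := StepA l l' ∨ StepB l l'

/-- `r` is an (a)-reduction of `l`: it is obtained from `l` by finitely many
applications of operation (a), and operation (a) no longer applies to it. -/
def IsAReduction {α : Type*} (l r : List α) : Prop :=
  Relation.ReflTransGen StepA l r ∧ ∀ r', ¬ StepA r r'

/-- `l` has trivial (a,b)-reduction: operations (a) and (b) reduce it to length `0`. -/
def HasTrivialABReduction {α : Type*} (l : List α) : Prop :=
  Relation.ReflTransGen StepAB l []

/-- A label on a topological space `X`: either a subset of `X` (meant to be an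
irreducible component, `Sum.inl`) or a point of `X` (meant to be a closed point,
`Sum.inr`). -/
abbrev Label (X : Type*) := Set X ⊕ X

/-- A label is valid if it is an irreducible component or a closed point. -/
def Label.IsValid {X : Type*} [TopologicalSpace X] : Label X → Prop
  | .inl Z => Z ∈ irreducibleComponents X
  | .inr p => IsClosed ({p} : Set X)

/-- The dimension of a label: `1` for an irreducible component, `0` for a closed point. -/
def Label.dim {X : Type*} : Label X → ℕ := Sum.elim (fun _ => 1) (fun _ => 0)

/-- The cyclic successor of an index in a finite sequence. -/
def cyclicSucc {α : Type*} (b : List α) (i : Fin b.length) : Fin b.length :=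
  ⟨(i + 1) % b.length, Nat.mod_lt _ i.pos⟩

/-- The cyclic predecessor of an index in a finite sequence. -/
def cyclicPred {α : Type*} (b : List α) (i : Fin b.length) : Fin b.length :=
  ⟨(i + b.length - 1) % b.length, Nat.mod_lt _ i.pos⟩

/-- Condition (2) in the definition of a cycle sequence, imposed on the (a)-reduction
`b`: cyclically, consecutive entries have different dimensions, and every
zero-dimensional entry lies in both its cyclic neighbours. -/
def CyclicCond {X : Type*} (b : List (Label X)) : Prop :=
  (∀ i : Fin b.length, (b.get i).dim ≠ (b.get (cyclicSucc b i)).dim) ∧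
  ∀ i : Fin b.length, ∀ p : X, b.get i = Sum.inr p →
    (∃ Z : Set X, b.get (cyclicPred b i) = Sum.inl Z ∧ p ∈ Z) ∧
    (∃ Z : Set X, b.get (cyclicSucc b i) = Sum.inl Z ∧ p ∈ Z)

/-- A cycle sequence: every entry is an irreducible component or a closed point, and
some (a)-reduction of it satisfies the cyclic alternation and incidence conditions. -/
def IsCycleSeq {X : Type*} [TopologicalSpace X] (l : List (Label X)) : Prop :=
  (∀ a ∈ l, a.IsValid) ∧ ∃ b, IsAReduction l b ∧ CyclicCond b

/-- `FormsTree S` for a (finite) collection `S` of irreducible components: any single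
curve forms a tree, and `S ∪ {Z}` forms a tree if `S` forms a tree and the union of the
members of `S` meets `Z` in exactly one point. -/
inductive FormsTree {X : Type*} : Set (Set X) → Prop
  | single (Z : Set X) : FormsTree {Z}
  | insert {S : Set (Set X)} (Z : Set X) (hZ : Z ∉ S) (hS : FormsTree S) (p : X)
      (hp : (⋃₀ S) ∩ Z = {p}) : FormsTree (Insert.insert Z S)

open Set

section Reduction

variable {α : Type*} {l : List α}

lemma not_stepA_of_nodup (hl : l.Nodup) (hlen : 3 ≤ l.length) (r : List α) : ¬ StepA l r := by
  rintro (⟨x, rfl, -⟩ | ⟨n, x, rest, hrot, -⟩)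
  · simp at hlen
  · have := (List.nodup_rotate (n := n)).2 hl
    simp [hrot] at this

lemma not_stepB_of_nodup (hl : l.Nodup) (hlen : 3 ≤ l.length) (r : List α) : ¬ StepB l r := by
  rintro (⟨n, x, y, hrot, -⟩ | ⟨n, x, y, rest, hrot, -⟩)
  · have := congrArg List.length hrot
    simp only [List.length_rotate, List.length_cons, List.length_nil] at this
    omega
  · have := (List.nodup_rotate (n := n)).2 hl
    simp [hrot] at this

lemma isAReduction_self_of_nodup (hl : l.Nodup) (hlen : 3 ≤ l.length) : IsAReduction l l :=
  ⟨.refl, not_stepA_of_nodup hl hlen⟩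

lemma not_hasTrivialABReduction_of_nodup (hl : l.Nodup) (hlen : 3 ≤ l.length) :
    ¬ HasTrivialABReduction l := by
  intro h
  rcases h.cases_head with rfl | ⟨r, hA | hB, -⟩
  · simp at hlen
  · exact not_stepA_of_nodup hl hlen r hA
  · exact not_stepB_of_nodup hl hlen r hB

end Reduction

namespace Label

variable {X : Type*}

def Adj : Label X → Label X → Prop
  | .inl Z, .inr p => p ∈ Z
  | .inr p, .inl Z => p ∈ Z
  | _, _ => False

lemma Adj.dim_ne {x y : Label X} (h : x.Adj y) : x.dim ≠ y.dim := by
  cases x <;> cases y <;> simp_all [Adj, dim]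

lemma Adj.exists_of_inr_left {p : X} {y : Label X} (h : Adj (.inr p) y) :
    ∃ Z, y = .inl Z ∧ p ∈ Z := by
  cases y <;> simp_all [Adj]

lemma Adj.exists_of_inr_right {x : Label X} {p : X} (h : x.Adj (.inr p)) :
    ∃ Z, x = .inl Z ∧ p ∈ Z := by
  cases x <;> simp_all [Adj]

end Label

lemma cyclicCond_map_range {X : Type*} {n : ℕ} (e : ℕ → Label X)
    (hadj : ∀ j, j + 1 < n → (e j).Adj (e (j + 1))) (hclose : (e (n - 1)).Adj (e 0)) :
    CyclicCond ((List.range n).map e) := by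
  set b := (List.range n).map e
  have hget : ∀ i, b.get i = e i := fun i => by simp [b]
  have hlen : b.length = n := by simp [b]
  have hsucc : ∀ i : Fin b.length, (e i).Adj (e (cyclicSucc b i)) := by
    intro ⟨i, hi⟩
    simp only [cyclicSucc, hlen] at hi ⊢
    rcases Nat.lt_or_ge (i + 1) n with h | h
    · rw [Nat.mod_eq_of_lt h]; exact hadj i h
    · rw [show i + 1 = n by omega, Nat.mod_self, show i = n - 1 by omega]; exact hclose
  have hpred : ∀ i : Fin b.length, (e (cyclicPred b i)).Adj (e i) := by
    intro ⟨i, hi⟩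
    simp only [cyclicPred, hlen] at hi ⊢
    rcases Nat.eq_zero_or_pos i with rfl | h
    · rw [zero_add, Nat.mod_eq_of_lt (by omega)]; exact hclose
    · rw [show i + n - 1 = i - 1 + n by omega, Nat.add_mod_right, Nat.mod_eq_of_lt (by omega)]
      simpa [show i - 1 + 1 = i by omega] using hadj (i - 1) (by omega)
  refine ⟨fun i => by simpa only [hget] using (hsucc i).dim_ne, fun i p hp => ?_⟩
  rw [hget] at hp
  have hp' := hpred i
  have hs' := hsucc i
  rw [hp] at hp' hs'
  simp only [hget]
  exact ⟨hp'.exists_of_inr_right, hs'.exists_of_inr_left⟩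

section Topology

open Order TopologicalSpace Topology

variable {X : Type*} [TopologicalSpace X]

lemma two_le_topologicalKrullDim_of_specializes [IrreducibleSpace X] {x y z : X}
    (hxy : x ⤳ y) (hyx : ¬ y ⤳ x) (hxz : ¬ x ⤳ z) : 2 ≤ topologicalKrullDim X := by
  let pointClosure (a : X) : IrreducibleCloseds X :=
    ⟨closure {a}, isIrreducible_singleton.closure, isClosed_closure⟩
  let top : IrreducibleCloseds X :=
    ⟨univ, IrreducibleSpace.isIrreducible_univ X, isClosed_univ⟩
  have hyx' : pointClosure y < pointClosure x := by
    refine lt_of_le_not_ge hxy.closure_subset fun h => hyx ?_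
    exact specializes_iff_closure_subset.2 h
  have hxt : pointClosure x < top := by
    refine lt_of_le_not_ge (subset_univ _) fun h => hxz ?_
    exact specializes_iff_mem_closure.2 (h (mem_univ z))
  let s : LTSeries (IrreducibleCloseds X) :=
    ⟨2, ![pointClosure y, pointClosure x, top], fun i => by fin_cases i <;> assumption⟩
  exact s.length_le_krullDim

lemma isClosed_singleton_of_mem_of_mem [T0Space X] {Z W : Set X}
    (hZ : Z ∈ irreducibleComponents X) (hW : W ∈ irreducibleComponents X) (hZW : Z ≠ W)
    (hdim : topologicalKrullDim Z ≤ 1) {p : X} (hpZ : p ∈ Z) (hpW : p ∈ W) :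
    IsClosed ({p} : Set X) := by
  by_contra hp
  obtain ⟨q, hpq, hqp⟩ : ∃ q, p ⤳ q ∧ q ≠ p := by
    by_contra! h
    exact hp (closure_subset_iff_isClosed.1 fun q hq => h q (specializes_iff_mem_closure.2 hq))
  have hclW : closure {p} ⊆ W :=
    closure_minimal (singleton_subset_iff.2 hpW) (isClosed_of_mem_irreducibleComponents W hW)
  obtain ⟨z, hzZ, hpz⟩ : ∃ z ∈ Z, ¬ p ⤳ z := by
    by_contra! h
    exact hZW (hZ.eq_of_subset hW.1 fun z hz => hclW (h z hz).mem_closure)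
  have hqZ : q ∈ Z := hpq.mem_closed (isClosed_of_mem_irreducibleComponents Z hZ) hpZ
  have := isIrreducible_iff_irreducibleSpace.1 hZ.1
  have hind : IsInducing ((↑) : Z → X) := .subtypeVal
  have h2 := two_le_topologicalKrullDim_of_specializes (x := ⟨p, hpZ⟩) (y := ⟨q, hqZ⟩)
    (z := ⟨z, hzZ⟩) (hind.specializes_iff.1 hpq)
    (fun h => hqp (hpq.antisymm (hind.specializes_iff.2 h)).eq.symm)
    (fun h => hpz (hind.specializes_iff.2 h))
  exact absurd (h2.trans hdim) (by decide)

end Topology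

section Linked

variable {X : Type*}

def IsLinked (S : Set (Set X)) : Prop :=
  ∀ A ⊆ S, A.Nonempty → (S \ A).Nonempty → (⋃₀ A ∩ ⋃₀ (S \ A)).Nonempty

lemma isLinked_of_closed_cover [TopologicalSpace X] [PreconnectedSpace X] {S : Set (Set X)}
    (hfin : S.Finite) (hcl : ∀ Z ∈ S, IsClosed Z) (hne : ∀ Z ∈ S, Z.Nonempty)
    (hcover : ⋃₀ S = univ) : IsLinked S := by
  intro A hA ⟨Z, hZA⟩ ⟨W, hWS, hWA⟩
  have hclosed : ∀ B ⊆ S, IsClosed (⋃₀ B) := fun B hB => by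
    rw [sUnion_eq_biUnion]
    exact (hfin.subset hB).isClosed_biUnion fun Z hZ => hcl Z (hB hZ)
  obtain ⟨z, hz⟩ := hne Z (hA hZA)
  obtain ⟨w, hw⟩ := hne W hWS
  simpa using isPreconnected_closed_iff.1 isPreconnected_univ _ _ (hclosed A hA)
    (hclosed _ sdiff_subset) (by rw [← sUnion_union, union_sdiff_cancel hA, hcover])
    ⟨z, trivial, Z, hZA, hz⟩ ⟨w, trivial, W, ⟨hWS, hWA⟩, hw⟩

lemma IsLinked.diff_singleton {S : Set (Set X)} (hS : IsLinked S) {Z W : Set X} (hZ : Z ∈ S)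
    (hW : W ∈ S \ {Z}) (hleaf : Z ∩ ⋃₀ (S \ {Z}) ⊆ W) : IsLinked (S \ {Z}) := by
  intro A hA hAne ⟨T, hT⟩
  have hZA : Z ∉ A := fun h => (hA h).2 rfl
  have hAZ : ⋃₀ A ⊆ ⋃₀ (S \ {Z}) := sUnion_mono hA
  by_cases hWA : W ∈ A
  · obtain ⟨r, hrA, U, hU, hrU⟩ := hS (insert Z A) (insert_subset hZ (hA.trans sdiff_subset))
      (insert_nonempty Z A) ⟨T, hT.1.1, by simpa [hT.2] using hT.1.2⟩
    have hU' : U ∈ (S \ {Z}) \ A := by simp_all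
    refine ⟨r, ?_, U, hU', hrU⟩
    rcases (sUnion_insert Z A ▸ hrA : r ∈ Z ∪ ⋃₀ A) with hrZ | hrA
    · exact ⟨W, hWA, hleaf ⟨hrZ, U, hU'.1, hrU⟩⟩
    · exact hrA
  · obtain ⟨r, hrA, U, ⟨hUS, hUA⟩, hrU⟩ := hS A (hA.trans sdiff_subset) hAne ⟨T, hT.1.1, hT.2⟩
    refine ⟨r, hrA, ?_⟩
    by_cases hUZ : U = Z
    · exact ⟨W, ⟨hW, hWA⟩, hleaf ⟨hUZ ▸ hrU, hAZ hrA⟩⟩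
    · exact ⟨U, ⟨⟨hUS, hUZ⟩, hUA⟩, hrU⟩

end Linked

section Paths

variable {X : Type*} {S : Set (Set X)}

structure IsSetPath (S : Set (Set X)) (m : ℕ) (Z : ℕ → Set X) (p : ℕ → X) : Prop where
  mem : ∀ i < m, Z i ∈ S
  injOn_sets : InjOn Z (Iio m)
  injOn_points : InjOn p (Iio (m - 1))
  mem_left : ∀ i < m - 1, p i ∈ Z i
  mem_right : ∀ i < m - 1, p i ∈ Z (i + 1)

def HasCycle (S : Set (Set X)) : Prop :=
  ∃ m Z p q, 2 ≤ m ∧ IsSetPath S m Z p ∧ q ∈ Z (m - 1) ∧ q ∈ Z 0 ∧ ∀ i < m - 1, p i ≠ q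

namespace IsSetPath

variable {m : ℕ} {Z : ℕ → Set X} {p : ℕ → X}

lemma mono (h : IsSetPath S m Z p) {T : Set (Set X)} (hST : S ⊆ T) : IsSetPath T m Z p :=
  { h with mem := fun i hi => hST (h.mem i hi) }

lemma le_ncard (h : IsSetPath S m Z p) (hfin : S.Finite) : m ≤ S.ncard := by
  calc m = (Z '' Iio m).ncard := by
        rw [h.injOn_sets.ncard_image, ← Finset.coe_range, ncard_coe_finset,
          Finset.card_range]
    _ ≤ S.ncard := ncard_le_ncard (image_subset_iff.2 h.mem) hfin

lemma drop (h : IsSetPath S m Z p) (j : ℕ) :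
    IsSetPath S (m - j) (fun i => Z (j + i)) (fun i => p (j + i)) where
  mem i hi := h.mem _ (by omega)
  injOn_sets i hi i' hi' hii' := by
    simp only [mem_Iio] at hi hi'
    have := h.injOn_sets (mem_Iio.2 (by omega)) (mem_Iio.2 (by omega)) hii'
    omega
  injOn_points i hi i' hi' hii' := by
    simp only [mem_Iio] at hi hi'
    have := h.injOn_points (mem_Iio.2 (by omega)) (mem_Iio.2 (by omega)) hii'
    omega
  mem_left i hi := h.mem_left _ (by omega)
  mem_right i hi := by simpa only [add_assoc] using h.mem_right (j + i) (by omega)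

lemma snoc (h : IsSetPath S m Z p) (hm : 1 ≤ m) {W : Set X} (hW : W ∈ S)
    (hWZ : ∀ i < m, Z i ≠ W) {q : X} (hqZ : q ∈ Z (m - 1)) (hqW : q ∈ W)
    (hqp : ∀ i < m - 1, p i ≠ q) :
    IsSetPath S (m + 1) (fun i => if i < m then Z i else W)
      (fun i => if i < m - 1 then p i else q) where
  mem i hi := by
    split_ifs with him
    exacts [h.mem i him, hW]
  injOn_sets i hi i' hi' hii' := by
    simp only [mem_Iio] at hi hi'
    dsimp only at hii'
    split_ifs at hii' with h₁ h₂ h₂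
    exacts [h.injOn_sets h₁ h₂ hii', (hWZ i h₁ hii').elim, (hWZ i' h₂ hii'.symm).elim, by omega]
  injOn_points i hi i' hi' hii' := by
    simp only [mem_Iio] at hi hi'
    dsimp only at hii'
    split_ifs at hii' with h₁ h₂ h₂
    exacts [h.injOn_points h₁ h₂ hii', (hqp i h₁ hii').elim, (hqp i' h₂ hii'.symm).elim, by omega]
  mem_left i hi := by
    simp only [show i < m by omega, if_true]
    split_ifs with h₁
    · exact h.mem_left i h₁
    · rwa [show i = m - 1 by omega]
  mem_right i hi := by
    by_cases h₁ : i < m - 1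
    · simpa [h₁, show i + 1 < m by omega] using h.mem_right i h₁
    · simpa [h₁, show ¬ i + 1 < m by omega] using hqW

/- A second point shared with another member `W` would close up part of the path to a cycle, or
else `W` would prolong the path. -/
lemma eq_of_mem_last (h : IsSetPath S m Z p) (hm : 2 ≤ m) (hS : ¬ HasCycle S)
    (hmax : ∀ Z' p', ¬ IsSetPath S (m + 1) Z' p') {q : X} (hqZ : q ∈ Z (m - 1))
    {W : Set X} (hW : W ∈ S) (hWZ : W ≠ Z (m - 1)) (hqW : q ∈ W) : q = p (m - 2) := by
  by_contra hq
  have closeUp : ∀ j, j + 2 ≤ m → q ∈ Z j → (∀ i, j ≤ i → i < m - 1 → p i ≠ q) → False :=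
    fun j hj hqj hpq => hS ⟨m - j, _, _, q, by omega, h.drop j,
      by rwa [show j + (m - j - 1) = m - 1 by omega], by rwa [add_zero],
      fun i hi => hpq (j + i) (by omega) (by omega)⟩
  by_cases hpq : ∃ i < m - 1, p i = q
  · obtain ⟨i, hi, rfl⟩ := hpq
    have him : i ≠ m - 2 := fun him => hq (by rw [him])
    refine closeUp (i + 1) (by omega) (h.mem_right i hi) fun i' hi' hi'm hii' => ?_
    have := h.injOn_points (mem_Iio.2 hi'm) (mem_Iio.2 hi) hii'
    omega
  push Not at hpq
  by_cases hqZ' : ∃ j < m - 1, q ∈ Z j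
  · obtain ⟨j, hj, hqj⟩ := hqZ'
    exact closeUp j (by omega) hqj fun i _ hi => hpq i hi
  push Not at hqZ'
  refine hmax _ _ (h.snoc (by omega) hW (fun i hi hZW => ?_) hqZ hqW hpq)
  rcases Nat.lt_or_ge i (m - 1) with hi' | hi'
  · exact hqZ' i hi' (hZW ▸ hqW)
  · exact hWZ (by rw [← hZW, show i = m - 1 by omega])

end IsSetPath

lemma HasCycle.mono {T : Set (Set X)} (hST : S ⊆ T) : HasCycle S → HasCycle T
  | ⟨m, Z, p, q, hm, h, hq⟩ => ⟨m, Z, p, q, hm, h.mono hST, hq⟩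

lemma exists_longest_isSetPath (hfin : S.Finite) (hS : IsLinked S) (hcard : 1 < S.ncard) :
    ∃ m Z p, 2 ≤ m ∧ IsSetPath S m Z p ∧ ∀ Z' p', ¬ IsSetPath S (m + 1) Z' p' := by
  classical
  let P k := ∃ Z p, IsSetPath S k Z p
  have hP2 : P 2 := by
    obtain ⟨Z₀, hZ₀⟩ := nonempty_of_ncard_ne_zero (by omega : S.ncard ≠ 0)
    obtain ⟨Z₁, hZ₁, hZ₁₀⟩ := exists_ne_of_one_lt_ncard hcard Z₀
    obtain ⟨q, hq₀, W, hW, hqW⟩ := hS {Z₀} (singleton_subset_iff.2 hZ₀) (singleton_nonempty Z₀)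
      ⟨Z₁, hZ₁, hZ₁₀⟩
    have hsingle : IsSetPath S 1 (fun _ => Z₀) (fun _ => q) :=
      ⟨fun _ _ => hZ₀, fun i hi j hj _ => by simp_all, fun i hi => by simp at hi,
        fun i hi => by omega, fun i hi => by omega⟩
    exact ⟨_, _, hsingle.snoc le_rfl hW.1 (fun _ _ h => hW.2 h.symm)
      (sUnion_singleton Z₀ ▸ hq₀) hqW (by omega)⟩
  have hbound : ∀ k, P k → k ≤ S.ncard := fun k ⟨Z, p, h⟩ => h.le_ncard hfin
  have hle : 2 ≤ Nat.findGreatest P S.ncard := Nat.le_findGreatest (by omega) hP2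
  obtain ⟨Z, p, h⟩ : P (Nat.findGreatest P S.ncard) := Nat.findGreatest_spec (by omega) hP2
  refine ⟨_, Z, p, hle, h, fun Z' p' h' => ?_⟩
  exact Nat.findGreatest_is_greatest (Nat.lt_succ_self _) (hbound _ ⟨Z', p', h'⟩) ⟨Z', p', h'⟩

theorem formsTree_of_isLinked_of_not_hasCycle (hfin : S.Finite) (hne : S.Nonempty)
    (hS : IsLinked S) (hacyc : ¬ HasCycle S) : FormsTree S := by
  induction hn : S.ncard using Nat.strong_induction_on generalizing S with
  | _ n ih =>
  rcases Nat.lt_or_ge 1 S.ncard with hcard | hcard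
  · obtain ⟨m, Z, p, hm, hpath, hmax⟩ := exists_longest_isSetPath hfin hS hcard
    have hlast : Z (m - 1) ∈ S := hpath.mem _ (by omega)
    have hprev : Z (m - 2) ∈ S \ {Z (m - 1)} := ⟨hpath.mem _ (by omega), fun h =>
      absurd (hpath.injOn_sets (mem_Iio.2 (by omega)) (mem_Iio.2 (by omega)) h) (by omega)⟩
    have hpZ : p (m - 2) ∈ Z (m - 1) := by
      simpa [show m - 2 + 1 = m - 1 by omega] using hpath.mem_right (m - 2) (by omega)
    have hleaf : ⋃₀ (S \ {Z (m - 1)}) ∩ Z (m - 1) = {p (m - 2)} := by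
      refine Subset.antisymm ?_ ?_
      · rintro q ⟨⟨W, ⟨hW, hWZ⟩, hqW⟩, hqZ⟩
        exact hpath.eq_of_mem_last hm hacyc hmax hqZ hW hWZ hqW
      · rintro q rfl
        exact ⟨⟨_, hprev, hpath.mem_left _ (by omega)⟩, hpZ⟩
    have hS' : IsLinked (S \ {Z (m - 1)}) := hS.diff_singleton hlast hprev
      (by rw [inter_comm, hleaf]; exact singleton_subset_iff.2 (hpath.mem_left _ (by omega)))
    have htree := ih _ (hn ▸ ncard_sdiff_singleton_lt_of_mem hlast hfin) (hfin.subset sdiff_subset)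
      ⟨_, hprev⟩ hS' (fun h => hacyc (h.mono sdiff_subset)) rfl
    simpa [insert_eq_of_mem hlast] using htree.insert _ (fun h => h.2 rfl) _ hleaf
  · obtain ⟨Z, rfl⟩ := ncard_eq_one.1 (le_antisymm hcard (hne.ncard_pos hfin))
    exact .single Z

end Paths

section CycleSequence

variable {X : Type*} [TopologicalSpace X]

lemma exists_isCycleSeq_of_cyclic {m : ℕ} (hm : 2 ≤ m) {Z : ℕ → Set X} {p : ℕ → X}
    (hZ : ∀ i < m, Z i ∈ irreducibleComponents X) (hp : ∀ i < m, IsClosed ({p i} : Set X))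
    (hZinj : InjOn Z (Iio m)) (hpinj : InjOn p (Iio m)) (hleft : ∀ i < m, p i ∈ Z i)
    (hright : ∀ i < m - 1, p i ∈ Z (i + 1)) (hlast : p (m - 1) ∈ Z 0) :
    ∃ l : List (Label X), IsCycleSeq l ∧ ¬ HasTrivialABReduction l ∧ l.Pairwise (· ≠ ·) := by
  let e : ℕ → Label X := fun j => if j % 2 = 0 then .inl (Z (j / 2)) else .inr (p (j / 2))
  have he_even : ∀ i, e (2 * i) = .inl (Z i) := fun i => by simp [e]
  have he_odd : ∀ i, e (2 * i + 1) = .inr (p i) := fun i => by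
    simp [e, show (2 * i + 1) / 2 = i by omega]
  have hnodup : ((List.range (2 * m)).map e).Nodup := by
    refine List.nodup_range.map_on fun j hj j' hj' hjj' => ?_
    simp only [List.mem_range] at hj hj'
    obtain ⟨i, rfl | rfl⟩ := Nat.even_or_odd' j <;> obtain ⟨i', rfl | rfl⟩ := Nat.even_or_odd' j'
      <;> simp only [he_even, he_odd, Sum.inl.injEq, Sum.inr.injEq, reduceCtorEq] at hjj'
    · rw [hZinj (mem_Iio.2 (by omega)) (mem_Iio.2 (by omega)) hjj']
    · rw [hpinj (mem_Iio.2 (by omega)) (mem_Iio.2 (by omega)) hjj']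
  have hlen : 3 ≤ ((List.range (2 * m)).map e).length := by simp; omega
  refine ⟨_, ⟨?_, _, isAReduction_self_of_nodup hnodup hlen, cyclicCond_map_range e ?_ ?_⟩,
    not_hasTrivialABReduction_of_nodup hnodup hlen, hnodup⟩
  · simp only [List.mem_map, List.mem_range, forall_exists_index, and_imp]
    rintro _ j hj rfl
    obtain ⟨i, rfl | rfl⟩ := Nat.even_or_odd' j
    · exact he_even i ▸ hZ i (by omega)
    · exact he_odd i ▸ hp i (by omega)
  · intro j hj
    obtain ⟨i, rfl | rfl⟩ := Nat.even_or_odd' j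
    · rw [he_even, he_odd]
      exact hleft i (by omega)
    · rw [he_odd, show 2 * i + 1 + 1 = 2 * (i + 1) by ring, he_even]
      exact hright i (by omega)
  · rw [show 2 * m - 1 = 2 * (m - 1) + 1 by omega, he_odd, show 0 = 2 * 0 by rfl, he_even]
    exact hlast

lemma HasCycle.exists_isCycleSeq [T0Space X]
    (hdim : ∀ Z ∈ irreducibleComponents X, topologicalKrullDim Z ≤ 1)
    (hcyc : HasCycle (irreducibleComponents X)) :
    ∃ l : List (Label X), IsCycleSeq l ∧ ¬ HasTrivialABReduction l ∧ l.Pairwise (· ≠ ·) := by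
  obtain ⟨m, Z, p, q, hm, hpath, hqZ, hqZ₀, hqp⟩ := hcyc
  let p' : ℕ → X := fun i => if i < m - 1 then p i else q
  have hleft : ∀ i < m, p' i ∈ Z i := fun i hi => by
    by_cases h : i < m - 1
    · simpa [p', h] using hpath.mem_left i h
    · simpa [p', h, show i = m - 1 by omega] using hqZ
  have hright : ∀ i < m - 1, p' i ∈ Z (i + 1) := fun i hi => by
    simpa [p', hi] using hpath.mem_right i hi
  have hlast : p' (m - 1) ∈ Z 0 := by simpa [p'] using hqZ₀
  have hp'inj : InjOn p' (Iio m) := fun i hi j hj hij => by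
    simp only [mem_Iio] at hi hj
    by_cases h₁ : i < m - 1 <;> by_cases h₂ : j < m - 1 <;> simp only [p', h₁, h₂, if_true,
      if_false] at hij
    exacts [hpath.injOn_points h₁ h₂ hij, (hqp i h₁ hij).elim, (hqp j h₂ hij.symm).elim,
      by omega]
  have hclosed : ∀ i < m, ∀ j < m, i ≠ j → ∀ x ∈ Z i, x ∈ Z j → IsClosed ({x} : Set X) :=
    fun i hi j hj hij x => isClosed_singleton_of_mem_of_mem (hpath.mem i hi) (hpath.mem j hj)
      (fun h => hij (hpath.injOn_sets (mem_Iio.2 hi) (mem_Iio.2 hj) h)) (hdim _ (hpath.mem i hi))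
  refine exists_isCycleSeq_of_cyclic hm hpath.mem (fun i hi => ?_) hpath.injOn_sets hp'inj hleft
    hright hlast
  by_cases h : i < m - 1
  · exact hclosed i hi (i + 1) (by omega) (by omega) _ (hleft i hi) (hright i h)
  · rw [show i = m - 1 by omega]
    exact hclosed (m - 1) (by omega) 0 (by omega) (by omega) _ (hleft _ (by omega)) hlast

end CycleSequence

theorem exists_nontrivial_cycle_sequence_of_not_formsTree_general
    (C : Scheme.{u})
    [ConnectedSpace C]
    (hfin : (irreducibleComponents C).Finite)
    (hdim : ∀ Z ∈ irreducibleComponents C, topologicalKrullDim Z = 1)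
    (htree : ¬ FormsTree (irreducibleComponents C)) :
    ∃ l : List (Label C), IsCycleSeq l ∧ ¬ HasTrivialABReduction l ∧
      l.Pairwise (· ≠ ·) := by
  obtain ⟨x⟩ := ConnectedSpace.toNonempty (α := C)
  have hlinked : IsLinked (irreducibleComponents C) :=
    isLinked_of_closed_cover hfin isClosed_of_mem_irreducibleComponents (fun Z hZ => hZ.1.1)
      sUnion_irreducibleComponents
  have hcycle : HasCycle (irreducibleComponents C) := by
    by_contra hacyc
    exact htree (formsTree_of_isLinked_of_not_hasCycle hfin
      ⟨_, irreducibleComponent_mem_irreducibleComponents x⟩ hlinked hacyc)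
  exact hcycle.exists_isCycleSeq fun Z hZ => (hdim Z hZ).le

/-- Let `C` be a connected scheme of finite type over an algebraically
closed field `k`, of pure dimension one, with finitely many irreducible components.
If `C` does not form a tree, then there exists a non-trivial cycle sequence whose
entries are pairwise distinct. -/
theorem exists_nontrivial_cycle_sequence_of_not_formsTree
    {k : Type u} [Field k] [IsAlgClosed k]
    (C : Scheme.{u}) (f : C ⟶ Spec (CommRingCat.of k))
    [LocallyOfFiniteType f] [QuasiCompact f]
    [ConnectedSpace C]
    (hfin : (irreducibleComponents C).Finite)
    (hdim : ∀ Z ∈ irreducibleComponents C, topologicalKrullDim Z = 1)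
    (htree : ¬ FormsTree (irreducibleComponents C)) :
    ∃ l : List (Label C), IsCycleSeq l ∧ ¬ HasTrivialABReduction l ∧
      l.Pairwise (· ≠ ·) :=
  exists_nontrivial_cycle_sequence_of_not_formsTree_general C hfin hdim htree
end

section
/- Let k be an algebraically closed field and let C be a connected scheme of finite type over k of pure dimension one, with irreducible decomposition C = C₁ ∪ ⋯ ∪ C_ℓ. If C does not form a tree, then there exist k ≥ 2 pairwise distinct irreducible components B₁, …, B_k of C such that for every 1 ≤ i ≤ k, the set B_i ∩ (⋃_{j≠i} B_j) contains at least two points. -/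
/-!
If no family of at least two components has every member meeting the others in two points,
then some component `Z` meets the union of the remaining ones in at most one point. As the
components are closed and `C` is connected, `Z` meets that union in exactly one point, and the
union of the remaining components is still connected: a closed separation of it extends to one
of `C` by adding `Z` to the side containing the meeting point. Induction on the number of
components then shows that they form a tree.
-/

open AlgebraicGeometry

universe u

namespace IsPreconnected

variable {X : Type*} [TopologicalSpace X] {A B : Set X}

theorem inter_nonempty_of_isClosed (h : IsPreconnected (A ∪ B)) (hA : IsClosed A)
    (hB : IsClosed B) (hA' : A.Nonempty) (hB' : B.Nonempty) : (A ∩ B).Nonempty := by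
  obtain ⟨x, -, hx⟩ := isPreconnected_closed_iff.mp h A B hA hB subset_rfl
    (hA'.mono (Set.subset_inter Set.subset_union_left subset_rfl))
    (hB'.mono (Set.subset_inter Set.subset_union_right subset_rfl))
  exact ⟨x, hx⟩

theorem of_union_of_inter_subsingleton (h : IsPreconnected (A ∪ B)) (hA : IsClosed A)
    (hB : IsClosed B) (hAB : (A ∩ B).Subsingleton) : IsPreconnected A := by
  rw [isPreconnected_iff_subset_of_fully_disjoint_closed hA]
  intro u v hu hv hcov huv
  wlog hABu : A ∩ B ⊆ u generalizing u v
  · obtain ⟨x, hx, hxu⟩ := Set.not_subset.mp hABu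
    have hABv : A ∩ B ⊆ v := fun y hy =>
      hAB hx hy ▸ (hcov hx.1).resolve_left hxu
    exact (this v u hv hu (Set.union_comm u v ▸ hcov) huv.symm hABv).symm
  have hsep := (isPreconnected_iff_subset_of_fully_disjoint_closed (hA.union hB)).mp h
    (A ∩ u ∪ B) (A ∩ v) ((hA.inter hu).union hB) (hA.inter hv)
    (by
      rintro x (hxA | hxB)
      · exact (hcov hxA).imp (fun hxu => Or.inl ⟨hxA, hxu⟩) fun hxv => ⟨hxA, hxv⟩
      · exact Or.inl (Or.inr hxB))
    (Disjoint.union_left (huv.mono Set.inter_subset_right Set.inter_subset_right)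
      (Set.disjoint_left.mpr fun x hxB hxAv =>
        Set.disjoint_left.mp huv (hABu ⟨hxAv.1, hxB⟩) hxAv.2))
  rcases hsep with hsub | hsub
  · exact Or.inl fun x hxA =>
      (hsub (Or.inl hxA)).elim (fun hx => hx.2) fun hxB => hABu ⟨hxA, hxB⟩
  · exact Or.inr fun x hxA => (hsub (Or.inl hxA)).2

end IsPreconnected

theorem formsTree_of_forall_exists_inter_subsingleton {X : Type*} [TopologicalSpace X]
    {T : Set (Set X)} (hfin : T.Finite) (hne : T.Nonempty) (hcl : ∀ Z ∈ T, IsClosed Z)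
    (hZne : ∀ Z ∈ T, Z.Nonempty) (hconn : IsPreconnected (⋃₀ T))
    (hleaf : ∀ S ⊆ T, 2 ≤ S.ncard → ∃ Z ∈ S, (Z ∩ ⋃₀ (S \ {Z})).Subsingleton) :
    FormsTree T := by
  obtain ⟨n, hn⟩ : ∃ n, T.ncard = n + 1 :=
    Nat.exists_eq_add_one.mpr ((Set.ncard_pos hfin).mpr hne)
  induction n generalizing T with
  | zero =>
    obtain ⟨Z, rfl⟩ := Set.ncard_eq_one.mp hn
    exact .single Z
  | succ n ih =>
    obtain ⟨Z, hZT, hZ⟩ := hleaf T subset_rfl (by omega)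
    set T' := T \ {Z}
    have hT : T = insert Z T' := (Set.insert_sdiff_self_of_mem hZT).symm
    have hT'card : T'.ncard = n + 1 := by
      rw [Set.ncard_sdiff_singleton_of_mem hZT]
      omega
    have hT'ne : T'.Nonempty := Set.nonempty_of_ncard_ne_zero (by omega)
    have hT'cl : IsClosed (⋃₀ T') := by
      rw [Set.sUnion_eq_biUnion]
      exact hfin.sdiff.isClosed_biUnion fun W hW => hcl W hW.1
    have hconn' : IsPreconnected (⋃₀ T' ∪ Z) := by
      rwa [hT, Set.sUnion_insert, Set.union_comm] at hconn
    obtain ⟨p, hp⟩ := hconn'.inter_nonempty_of_isClosed hT'cl (hcl Z hZT)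
      (Set.nonempty_sUnion.mpr (hT'ne.imp fun W hW => ⟨hW, hZne W hW.1⟩)) (hZne Z hZT)
    have hmeet : ⋃₀ T' ∩ Z = {p} := (Set.inter_comm Z _ ▸ hZ).eq_singleton_of_mem hp
    have htree' : FormsTree T' :=
      ih hfin.sdiff hT'ne (fun W hW => hcl W hW.1) (fun W hW => hZne W hW.1)
        (hconn'.of_union_of_inter_subsingleton hT'cl (hcl Z hZT)
          (hmeet ▸ Set.subsingleton_singleton))
        (fun S hS => hleaf S (hS.trans Set.sdiff_subset)) hT'card
    rw [hT]
    exact .insert Z (fun h => h.2 rfl) htree' p hmeet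

theorem exists_components_meeting_in_two_points_of_not_formsTree_general
    (C : Scheme.{u})
    [ConnectedSpace C]
    (hfin : (irreducibleComponents C).Finite)
    (htree : ¬ FormsTree (irreducibleComponents C)) :
    ∃ S : Set (Set C), S ⊆ irreducibleComponents C ∧ S.Finite ∧ 2 ≤ S.ncard ∧
      ∀ Z ∈ S, (Z ∩ ⋃₀ (S \ {Z})).Nontrivial := by
  by_contra! hleaf
  obtain ⟨x⟩ := ConnectedSpace.toNonempty (α := C)
  refine htree (formsTree_of_forall_exists_inter_subsingleton hfin
    ⟨_, irreducibleComponent_mem_irreducibleComponents x⟩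
    (fun Z hZ => isClosed_of_mem_irreducibleComponents Z hZ) (fun Z hZ => hZ.1.1)
    ?_ fun S hS => hleaf S hS (hfin.subset hS))
  rw [sUnion_irreducibleComponents]
  exact isPreconnected_univ

/-- Let `C` be a connected scheme of finite type over an algebraically
closed field `k`, of pure dimension one, with finitely many irreducible components.
If `C` does not form a tree, then there exists a finite collection `S` of at least two
(pairwise distinct) irreducible components of `C` such that every member `Z` of `S`
meets the union of the other members of `S` in at least two points. -/
theorem exists_components_meeting_in_two_points_of_not_formsTree
    {k : Type u} [Field k] [IsAlgClosed k]
    (C : Scheme.{u}) (f : C ⟶ Spec (CommRingCat.of k))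
    [LocallyOfFiniteType f] [QuasiCompact f]
    [ConnectedSpace C]
    (hfin : (irreducibleComponents C).Finite)
    (hdim : ∀ Z ∈ irreducibleComponents C, topologicalKrullDim Z = 1)
    (htree : ¬ FormsTree (irreducibleComponents C)) :
    ∃ S : Set (Set C), S ⊆ irreducibleComponents C ∧ S.Finite ∧ 2 ≤ S.ncard ∧
      ∀ Z ∈ S, (Z ∩ ⋃₀ (S \ {Z})).Nontrivial :=
  exists_components_meeting_in_two_points_of_not_formsTree_general C hfin htree
end

section
/- Let T be a nonempty contractible, locally path-connected topological space, and let U, V ⊆ T be open subsets with T = U ∪ V such that V is nonempty and connected. Then for every connected component U' of U, the intersection U' ∩ V is nonempty and connected. -/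
/-!
A function `g` on `U₁ ∩ U₂` that is continuous with values in a discrete group is the transition
function of a covering space of `X = U₁ ∪ U₂`: two trivial charts glued by translation by `g`.
When `X` is simply connected and locally path-connected this covering has a global section, whose
coordinates in the two charts split `g` as `σ₁ - σ₂` with `σᵢ` locally constant on `Uᵢ`.

For a component `U'` of `U`, the open sets `U'` and `W = (U \ U') ∪ V` cover `T` and meet in
`U' ∩ V`. Connectedness of `T` makes this intersection nonempty. For a `ZMod 2`-valued `g` that is
continuous on it, `σ₁` is constant on `U'` and `σ₂` is constant on `V ⊆ W`, so `g` is constant.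
-/

open Set

section

variable {X G : Type*} [TopologicalSpace X] [AddCommGroup G] [TopologicalSpace G]

noncomputable def FiberBundleCore.ofTransition [IsTopologicalAddGroup G] {U₁ U₂ : Set X}
    (h₁ : IsOpen U₁) (h₂ : IsOpen U₂) (hcov : U₁ ∪ U₂ = univ) (g : X → G)
    (hg : ContinuousOn g (U₁ ∩ U₂)) : FiberBundleCore Bool X G :=
  let ε : Bool → X → G := fun i x => if i then g x else 0
  { baseSet := fun i => if i then U₁ else U₂
    isOpen_baseSet := fun i => by cases i <;> simpa
    indexAt := fun x => open Classical in decide (x ∈ U₁)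
    mem_baseSet_at := fun x => by
      by_cases hx : x ∈ U₁
      · simp [hx]
      · simpa [hx] using (hcov.symm ▸ mem_univ x : x ∈ U₁ ∪ U₂).resolve_left hx
    coordChange := fun i j x v => v + (ε j x - ε i x)
    coordChange_self := fun i x _ v => by simp
    continuousOn_coordChange := fun i j => by
      have : ContinuousOn (fun x => ε j x - ε i x)
          ((if i then U₁ else U₂) ∩ if j then U₁ else U₂) := by
        cases i <;> cases j <;> simp only [ε, sub_self, sub_zero, zero_sub, continuousOn_const,
          if_true, if_false, Bool.false_eq_true]
        · exact hg.mono (inter_comm _ _).subset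
        · exact hg.neg
      exact continuousOn_snd.add (this.comp continuousOn_fst fun p hp => hp.1)
    coordChange_comp := fun i j k x _ v => by abel }

theorem SimplyConnectedSpace.exists_eqOn_sub [SimplyConnectedSpace X] [LocallyPathConnectedSpace X]
    [DiscreteTopology G] [IsTopologicalAddGroup G] {U₁ U₂ : Set X} (h₁ : IsOpen U₁)
    (h₂ : IsOpen U₂) (hcov : U₁ ∪ U₂ = univ) {g : X → G} (hg : ContinuousOn g (U₁ ∩ U₂)) :
    ∃ σ₁ σ₂ : X → G, ContinuousOn σ₁ U₁ ∧ ContinuousOn σ₂ U₂ ∧ EqOn g (σ₁ - σ₂) (U₁ ∩ U₂) := by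
  let Z := FiberBundleCore.ofTransition h₁ h₂ hcov g hg
  obtain ⟨x₀⟩ : Nonempty X := inferInstance
  obtain ⟨s, ⟨-, hs⟩, -⟩ := (FiberBundle.isCoveringMap (F := G) (E := Z.Fiber))
    |>.existsUnique_continuousMap_lifts (ContinuousMap.id X) x₀ ⟨x₀, (0 : G)⟩ rfl
  have hs_proj : ∀ x, (s x).proj = x := congrFun hs
  let σ : Bool → X → G := fun i x => (Z.localTriv i (s x)).2
  have hσ : ∀ i, ContinuousOn (σ i) (Z.baseSet i) := fun i =>
    continuous_snd.comp_continuousOn <| (Z.localTriv i).continuousOn.comp s.continuous.continuousOn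
      fun x hx => by simpa [hs_proj x] using hx
  refine ⟨σ true, σ false, hσ true, hσ false, fun x _ => ?_⟩
  conv_lhs => rw [← hs_proj x]
  simp only [σ, Pi.sub_apply, FiberBundleCore.localTriv_apply]
  dsimp only [Z, FiberBundleCore.ofTransition]
  simp only [if_true, if_false, Bool.false_eq_true]
  abel

theorem SimplyConnectedSpace.isPreconnected_inter [SimplyConnectedSpace X]
    [LocallyPathConnectedSpace X] {U₁ U₂ S₁ S₂ : Set X} (h₁ : IsOpen U₁) (h₂ : IsOpen U₂)
    (hcov : U₁ ∪ U₂ = univ) (hS₁ : IsPreconnected S₁) (hS₂ : IsPreconnected S₂)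
    (hS₁U₁ : S₁ ⊆ U₁) (hS₂U₂ : S₂ ⊆ U₂) (hU₁₂ : U₁ ∩ U₂ ⊆ S₁ ∩ S₂) :
    IsPreconnected (S₁ ∩ S₂) := by
  refine isPreconnected_of_forall_constant fun f hf y hy z hz => ?_
  let φ : Bool → ZMod 2 := fun b => if b then 1 else 0
  have hφ : Function.Injective φ := by decide
  let g := φ ∘ f
  have hg : ContinuousOn g (U₁ ∩ U₂) :=
    (continuous_of_discreteTopology.comp_continuousOn hf).mono hU₁₂
  obtain ⟨σ₁, σ₂, hσ₁, hσ₂, hgσ⟩ := exists_eqOn_sub h₁ h₂ hcov hg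
  have hg_yz : g y = g z := by
    rw [hgσ ⟨hS₁U₁ hy.1, hS₂U₂ hy.2⟩, hgσ ⟨hS₁U₁ hz.1, hS₂U₂ hz.2⟩, Pi.sub_apply, Pi.sub_apply,
      hS₁.constant (hσ₁.mono hS₁U₁) hy.1 hz.1, hS₂.constant (hσ₂.mono hS₂U₂) hy.2 hz.2]
  exact hφ hg_yz

theorem IsOpen.diff_connectedComponentIn [LocallyConnectedSpace X] {U : Set X} (hU : IsOpen U)
    (x : X) : IsOpen (U \ connectedComponentIn U x) := by
  refine isOpen_iff_forall_mem_open.mpr fun y ⟨hyU, hyx⟩ => ⟨connectedComponentIn U y,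
    fun z hz => ⟨connectedComponentIn_subset U y hz, fun hzx => hyx ?_⟩,
    hU.connectedComponentIn, mem_connectedComponentIn hyU⟩
  rw [connectedComponentIn_eq hzx, ← connectedComponentIn_eq hz]
  exact mem_connectedComponentIn hyU

end

theorem component_inter_connected_of_contractible_general
    {T : Type*} [TopologicalSpace T] [ContractibleSpace T]
    [LocallyPathConnectedSpace T] (U V : Set T) (hU : IsOpen U) (hV : IsOpen V)
    (hUV : U ∪ V = Set.univ) (hVconn : IsConnected V) :
    ∀ x ∈ U, (connectedComponentIn U x ∩ V).Nonempty ∧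
      IsConnected (connectedComponentIn U x ∩ V) := by
  intro x hx
  set U' := connectedComponentIn U x
  set W := (U \ U') ∪ V
  have hU' : IsOpen U' := hU.connectedComponentIn
  have hW : IsOpen W := (hU.diff_connectedComponentIn x).union hV
  have hcov : U' ∪ W = univ := by
    rw [← hUV, ← union_assoc, union_sdiff_self,
      union_eq_right.mpr (connectedComponentIn_subset U x)]
  have hinter : U' ∩ W = U' ∩ V := by
    simp only [W, inter_union_distrib_left, inter_sdiff_self, empty_union]
  have hne : (U' ∩ V).Nonempty := by
    obtain ⟨v, hv⟩ := hVconn.nonempty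
    simpa [hinter] using isPreconnected_univ U' W hU' hW hcov.symm.subset
      ⟨x, trivial, mem_connectedComponentIn hx⟩ ⟨v, trivial, Or.inr hv⟩
  exact ⟨hne, hne, SimplyConnectedSpace.isPreconnected_inter hU' hW hcov
    isPreconnected_connectedComponentIn hVconn.isPreconnected subset_rfl subset_union_right
    hinter.subset⟩

/-- Let `T` be a nonempty contractible, locally path-connected
topological space and `U, V ⊆ T` open subsets with `T = U ∪ V` and `V` nonempty and
connected.  Then for every connected component `U'` of `U` (i.e. the connected
component in `U` of a point `x ∈ U`), the intersection `U' ∩ V` is nonempty and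
connected. -/
theorem component_inter_connected_of_contractible
    {T : Type*} [TopologicalSpace T] [Nonempty T] [ContractibleSpace T]
    [LocallyPathConnectedSpace T] (U V : Set T) (hU : IsOpen U) (hV : IsOpen V)
    (hUV : U ∪ V = Set.univ) (hVconn : IsConnected V) :
    ∀ x ∈ U, (connectedComponentIn U x ∩ V).Nonempty ∧
      IsConnected (connectedComponentIn U x ∩ V) :=
  component_inter_connected_of_contractible_general U V hU hV hUV hVconn
end
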